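/- arXiv:2408.01261 — 2 statements merged into one kernel-verified Lean document; each statement's English description precedes it below -/
import Mathlib

section
/- With the same setup, if D ⊆ (2^ℕ)^Y is comeager, written as a countable intersection of dense open sets each of whose relevant fibers over Γ-translates of restrictions of ζ are nonempty (as in the dense-open case), then {g ∈ G : g·ζ ∈ D} is comeager in G. -/
/-!
The map `g ↦ g·ζ` is continuous and coordinatewise has dense range, since finitely supported
sequences are dense in `2^ℕ`. It therefore pulls each open `Dn n` back to an open set, which is
also dense: a basic open set of `G` fixes `g` only on a finite `Y₀`, the fiber hypothesis provides
a point of `Dn n` compatible with that choice on `Y₀`, and the dense range on the remaining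
coordinates produces a `g` with `g·ζ ∈ Dn n`. A countable intersection of dense open sets is
comeager.
-/

/-- The group `⊕_{n∈ℕ}ℤ₂` of finitely supported sequences, with the discrete topology. -/
local instance : TopologicalSpace (ℕ →₀ ZMod 2) := ⊥

local instance : DiscreteTopology (ℕ →₀ ZMod 2) := ⟨rfl⟩

open Set

theorem Finsupp.denseRange_coeFn {ι M : Type*} [Zero M] [TopologicalSpace M] :
    DenseRange (fun f : ι →₀ M => (f : ι → M)) := by
  classical
  refine fun c => mem_closure_iff.2 fun V hV hcV => ?_
  obtain ⟨I, u, hu, huV⟩ := isOpen_pi_iff.1 hV c hcV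
  refine ⟨_, huV fun i hi => ?_, Finsupp.indicator I (fun i _ => c i), rfl⟩
  simpa [Finsupp.indicator_apply, Finset.mem_coe.1 hi] using (hu i hi).2

theorem dense_preimage_piMap {ι : Type*} {X Z : ι → Type*} [∀ i, TopologicalSpace (X i)]
    [∀ i, DiscreteTopology (X i)] [∀ i, TopologicalSpace (Z i)] {f : ∀ i, X i → Z i}
    (hf : ∀ i, DenseRange (f i)) {U : Set (∀ i, Z i)} (hU : IsOpen U)
    (hfib : ∀ (F : Finset ι) (x : ∀ i, X i), ∃ b ∈ U, ∀ i ∈ F, b i = f i (x i)) :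
    Dense (Pi.map f ⁻¹' U) := by
  classical
  refine fun x => mem_closure_iff.2 fun V hV hxV => ?_
  obtain ⟨F, W, hW, hWV⟩ := isOpen_pi_iff.1 hV x hxV
  obtain ⟨b, hbU, hbF⟩ := hfib F x
  let P : (∀ i, Z i) → ∀ i, Z i := fun c => (F : Set ι).piecewise (Pi.map f x) c
  have hP : Continuous P :=
    continuous_pi fun i => by
      by_cases hi : i ∈ F <;>
        simp only [P, Finset.mem_coe, hi, not_false_eq_true, piecewise_eq_of_mem,
          piecewise_eq_of_notMem] <;> fun_prop
  have hPb : P b ∈ U := by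
    convert hbU using 1
    funext i
    by_cases hi : i ∈ F <;> simp [P, hi, hbF]
  obtain ⟨h, hh⟩ := (DenseRange.piMap hf).exists_mem_open (hU.preimage hP) ⟨b, hPb⟩
  refine ⟨(F : Set ι).piecewise x h, hWV fun i hi => ?_, ?_⟩
  · simpa [Finset.mem_coe.1 hi] using (hW i hi).2
  · have hTg : Pi.map f ((F : Set ι).piecewise x h) = P (Pi.map f h) := by
      funext i
      by_cases hi : i ∈ F <;> simp [P, hi]
    rwa [mem_preimage, hTg]

theorem permutation_lemma_comeager_general {Y : Type*}
    (D : Set (Y → ℕ → ZMod 2)) (Dn : ℕ → Set (Y → ℕ → ZMod 2))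
    (hD : D = ⋂ n, Dn n)
    (hopen : ∀ n, IsOpen (Dn n))
    (ζ : Y → ℕ → ZMod 2)
    (hfib : ∀ n, ∀ (Y₀ : Finset Y) (γ : Y → ℕ →₀ ZMod 2), {y | γ y ≠ 0}.Finite →
      ∃ b ∈ Dn n, ∀ y ∈ Y₀, b y = fun i => γ y i + ζ y i) :
    {g : Y → ℕ →₀ ZMod 2 | (fun y i => g y i + ζ y i) ∈ D} ∈
      residual (Y → ℕ →₀ ZMod 2) := by
  classical
  let T := Pi.map fun y (s : ℕ →₀ ZMod 2) => ⇑s + ζ y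
  have hT : Continuous T := Continuous.piMap fun _ => continuous_of_discreteTopology
  have hTdense (y : Y) : DenseRange fun s : ℕ →₀ ZMod 2 => ⇑s + ζ y :=
    (Homeomorph.addRight (ζ y)).surjective.denseRange.comp Finsupp.denseRange_coeFn
      (Homeomorph.addRight (ζ y)).continuous
  change T ⁻¹' D ∈ _
  rw [hD, preimage_iInter, countable_iInter_mem]
  refine fun n => residual_of_dense_open ((hopen n).preimage hT)
    (dense_preimage_piMap hTdense (hopen n) fun F x => ?_)
  have hfin : {y | (F : Set Y).piecewise x 0 y ≠ 0}.Finite :=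
    F.finite_toSet.subset fun y hy => by_contra fun hyF => hy (by simp [hyF])
  obtain ⟨b, hb, hbF⟩ := hfib n F _ hfin
  refine ⟨b, hb, fun y hy => ?_⟩
  simp only [hbF y hy, Finset.mem_coe, hy, piecewise_eq_of_mem]
  rfl

/-- Permutation lemma (comeager case): if `D ⊆ (2^ℕ)^Y` is a countable intersection of
dense open sets, each of whose fibers over `Γ`-translates of restrictions of `ζ` are
nonempty, then `{g ∈ G : g·ζ ∈ D}` is comeager in `G = (⊕ℤ₂)^Y`. -/
theorem permutation_lemma_comeager {Y : Type*} [Countable Y] [Infinite Y]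
    (D : Set (Y → ℕ → ZMod 2)) (Dn : ℕ → Set (Y → ℕ → ZMod 2))
    (hD : D = ⋂ n, Dn n)
    (hopen : ∀ n, IsOpen (Dn n)) (hdense : ∀ n, Dense (Dn n))
    (ζ : Y → ℕ → ZMod 2)
    (hfib : ∀ n, ∀ (Y₀ : Finset Y) (γ : Y → ℕ →₀ ZMod 2), {y | γ y ≠ 0}.Finite →
      ∃ b ∈ Dn n, ∀ y ∈ Y₀, b y = fun i => γ y i + ζ y i) :
    {g : Y → ℕ →₀ ZMod 2 | (fun y i => g y i + ζ y i) ∈ D} ∈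
      residual (Y → ℕ →₀ ZMod 2) :=
  permutation_lemma_comeager_general D Dn hD hopen ζ hfib
end

section
/- Let E be an analytic equivalence relation on 2^ℕ extending E₀ (E₀ ⊆ E). If E has no comeager equivalence class, then E₀ is Borel reducible to E. -/
open MeasureTheory

/-- Eventual equality on Cantor space `2^ℕ`. -/
def E0 (x y : ℕ → Bool) : Prop := ∃ N, ∀ n ≥ N, x n = y n

/-!
Analytic sets have the Baire property, and `E` is invariant under flipping finitely many
coordinates of either component, which acts topologically transitively on `2^ℕ × 2^ℕ`. So `E` is
meagre or comeager, and comeager is excluded because some vertical section of a comeager set is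
comeager (the easy half of Kuratowski–Ulam), while sections of `E` are `E`-classes. The complement
of `E` then contains a decreasing sequence of dense open sets `D n`, and a fusion construction
gives a continuous `f x = w₀(x 0) w₁(x 1) ⋯`, the blocks `wₙ(0)`, `wₙ(1)` of equal length, chosen
so that any two prefixes followed by different blocks `wₙ(b)`, `wₙ(!b)` span a box inside `D n`.
Equal lengths make `f` a homomorphism of `E₀`, and the boxes send `E₀`-inequivalent pairs into `Eᶜ`.
-/

open Topology Filter Set TopologicalSpace PiNat

section Cylinders

variable {E : ℕ → Type*} [∀ n, TopologicalSpace (E n)] [∀ n, DiscreteTopology (E n)]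

lemma PiNat.eventually_cylinder_subset {x : ∀ n, E n} {U : Set (∀ n, E n)} (hU : U ∈ 𝓝 x) :
    ∀ᶠ n in atTop, cylinder x n ⊆ U := by
  obtain ⟨V, hVU, hV, hxV⟩ := mem_nhds_iff.1 hU
  obtain ⟨_, ⟨y, n, rfl⟩, hx, hsub⟩ :=
    (isTopologicalBasis_cylinders E).exists_subset_of_mem_open hxV hV
  filter_upwards [eventually_ge_atTop n] with m hm
  exact (cylinder_anti x hm).trans ((mem_cylinder_iff_eq.1 hx).trans_subset (hsub.trans hVU))

lemma PiNat.eventually_cylinder_prod_subset {x y : ∀ n, E n} {U : Set ((∀ n, E n) × ∀ n, E n)}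
    (hU : U ∈ 𝓝 (x, y)) : ∀ᶠ n in atTop, cylinder x n ×ˢ cylinder y n ⊆ U := by
  obtain ⟨V, hV, W, hW, hVW⟩ := mem_nhds_prod_iff.1 hU
  filter_upwards [eventually_cylinder_subset hV, eventually_cylinder_subset hW] with n hVn hWn
  exact (prod_mono hVn hWn).trans hVW

lemma PiNat.eq_of_forall_mem_closure_image_cylinder {X : Type*} [TopologicalSpace X] [T2Space X]
    {g : (∀ n, E n) → X} (hg : Continuous g) {z : ∀ n, E n} {x : X}
    (h : ∀ n, x ∈ closure (g '' cylinder z n)) : x = g z := by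
  refine eq_of_nhds_neBot (inf_neBot_iff.2 fun U hU W hW => ?_)
  obtain ⟨n, hn⟩ := (eventually_cylinder_subset (hg.continuousAt.preimage_mem_nhds hW)).exists
  obtain ⟨_, hyU, y, hy, rfl⟩ := mem_closure_iff_nhds.1 (h n) U hU
  exact ⟨g y, hyU, hn hy⟩

end Cylinders

lemma PiNat.exists_forall_res_of_forall_exists_cons {α : Type*} {P : List α → Prop} (h0 : P [])
    (h : ∀ l, P l → ∃ a, P (a :: l)) : ∃ z : ℕ → α, ∀ n, P (res z n) := by
  choose next hnext using h
  let branch : ℕ → {l // P l} := fun n => (fun l => ⟨next l.1 l.2 :: l.1, hnext _ _⟩)^[n] ⟨[], h0⟩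
  refine ⟨fun n => next (branch n).1 (branch n).2, fun n => ?_⟩
  suffices res _ n = (branch n).1 from this ▸ (branch n).2
  induction n with
  | zero => rfl
  | succ n ih => rw [res_succ, ih]; simp only [branch, Function.iterate_succ_apply']

lemma isMeagre_diff_of_residualEq {Y : Type*} [TopologicalSpace Y] {s t : Set Y}
    (h : s =ᶠ[residual Y] t) : IsMeagre (s \ t) := by
  rw [IsMeagre]
  filter_upwards [h] with x hx using fun hxst => hxst.2 (Eq.mp hx hxst.1)

section BaireHull

variable {Y : Type*} [TopologicalSpace Y] [SecondCountableTopology Y]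

/-- `B` together with the points near which `B` is not meagre. -/
def baireHull (B : Set Y) : Set Y := B ∪ (⋃₀ {V ∈ countableBasis Y | IsMeagre (V ∩ B)})ᶜ

lemma subset_baireHull (B : Set Y) : B ⊆ baireHull B := subset_union_left

lemma baireMeasurableSet_baireHull (B : Set Y) : BaireMeasurableSet (baireHull B) := by
  set U := ⋃₀ {V ∈ countableBasis Y | IsMeagre (V ∩ B)}
  have hU : IsOpen U := isOpen_sUnion fun V hV => (isBasis_countableBasis Y).isOpen hV.1
  have hUB : IsMeagre (U ∩ B) := by
    simp only [U, sUnion_eq_biUnion, iUnion₂_inter]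
    exact isMeagre_biUnion ((countable_countableBasis Y).mono fun _ h => h.1) fun _ h => h.2
  have : baireHull B = (U ∩ B) ∪ Uᶜ := by
    ext x; by_cases hx : x ∈ U <;> simp [baireHull, U, hx]
  rw [this]
  exact hUB.baireMeasurableSet.union hU.baireMeasurableSet.compl

/-- If `C =ᵇ W` with `W` open, then `B` is meagre in every basic open subset of `W`, so `W` misses
`baireHull B \ B`. -/
lemma isMeagre_of_subset_baireHull_diff {B C : Set Y} (hC : BaireMeasurableSet C)
    (h : C ⊆ baireHull B \ B) : IsMeagre C := by
  obtain ⟨W, hW, hCW⟩ := hC.residualEq_isOpen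
  have hWU : W ⊆ ⋃₀ {V ∈ countableBasis Y | IsMeagre (V ∩ B)} := by
    intro x hx
    obtain ⟨V, hV, hxV, hVW⟩ := (isBasis_countableBasis Y).exists_subset_of_mem_open hx hW
    refine ⟨V, ⟨hV, (isMeagre_diff_of_residualEq hCW.symm).mono ?_⟩, hxV⟩
    exact fun y hy => ⟨hVW hy.1, fun hyC => (h hyC).2 hy.2⟩
  refine (isMeagre_diff_of_residualEq hCW).mono fun x hxC => ?_
  refine ⟨hxC, fun hxW => ?_⟩
  rcases (h hxC).1 with hxB | hxU
  · exact (h hxC).2 hxB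
  · exact hxU (hWU hxW)

end BaireHull

/-- Lusin–Sierpiński: for `A l = g '' {z | res z l.length = l}`, the Baire measurable sets
`G l = baireHull (A l) ∩ closure (A l)` satisfy `G l ⊆ ⋃ k, G (k :: l)` off a meagre set `M`, and a
point of `G [] \ M` follows a branch `z` through the closures of the `A (res z n)`, so it is `g z`.
-/
theorem MeasureTheory.AnalyticSet.baireMeasurableSet {Y : Type*} [TopologicalSpace Y] [T2Space Y]
    [SecondCountableTopology Y] {A : Set Y} (hA : AnalyticSet A) : BaireMeasurableSet A := by
  rw [AnalyticSet] at hA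
  rcases hA with rfl | ⟨g, hg, rfl⟩
  · exact isOpen_empty.baireMeasurableSet
  let A : List ℕ → Set Y := fun l => g '' {z | res z l.length = l}
  let G : List ℕ → Set Y := fun l => baireHull (A l) ∩ closure (A l)
  have hA_cons : ∀ l, A l = ⋃ k, A (k :: l) := by
    intro l
    simp only [A, ← image_iUnion]
    congr 1
    ext z
    simp only [mem_ofPred_eq, mem_iUnion, List.length_cons, res_succ, List.cons.injEq]
    exact ⟨fun hz => ⟨_, rfl, hz⟩, fun ⟨_, _, hz⟩ => hz⟩
  have hAG : ∀ l, A l ⊆ G l := fun l => subset_inter (subset_baireHull _) subset_closure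
  have hG : ∀ l, BaireMeasurableSet (G l) := fun l =>
    (baireMeasurableSet_baireHull _).inter isClosed_closure.isOpen_compl.baireMeasurableSet.of_compl
  set M := ⋃ l, G l \ ⋃ k, G (k :: l)
  have hM : IsMeagre M := by
    refine isMeagre_iUnion fun l => isMeagre_of_subset_baireHull_diff
      ((hG l).diff (.iUnion fun k => hG _)) fun x hx => ⟨hx.1.1, fun hxA => hx.2 ?_⟩
    rw [hA_cons, mem_iUnion] at hxA
    exact mem_iUnion.2 (hxA.imp fun k hk => hAG _ hk)
  have hGM : G [] \ M ⊆ range g := by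
    intro x ⟨hx, hxM⟩
    obtain ⟨z, hz⟩ := exists_forall_res_of_forall_exists_cons (P := fun l => x ∈ G l) hx
      fun l hl => by_contra fun h => hxM (mem_iUnion.2 ⟨l, hl, fun hk => h (mem_iUnion.1 hk)⟩)
    refine ⟨z, (eq_of_forall_mem_closure_image_cylinder hg fun n => ?_).symm⟩
    simpa [G, A, cylinder_eq_res, res_length] using (hz n).2
  have hrange : range g ⊆ G [] := by simpa [A] using hAG []
  refine ((hG []).diff hM.baireMeasurableSet).congr ?_
  filter_upwards [hM] with x hx
  exact propext ⟨fun h => hGM h, fun h => ⟨hrange h, hx⟩⟩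

section KuratowskiUlam

variable {X Y : Type*} [TopologicalSpace X] [TopologicalSpace Y] [SecondCountableTopology Y]

lemma eventually_dense_preimage_prodMk {D : Set (X × Y)} (hD : IsOpen D) (hd : Dense D) :
    ∀ᶠ x in residual X, Dense (Prod.mk x ⁻¹' D) := by
  have hb := isBasis_countableBasis Y
  have : ∀ V ∈ countableBasis Y,
      ∀ᶠ x in residual X, V.Nonempty → x ∈ Prod.fst '' (D ∩ univ ×ˢ V) := by
    intro V hV
    rcases V.eq_empty_or_nonempty with rfl | hVne
    · simp
    refine mem_of_superset (residual_of_dense_open (isOpenMap_fst _ (hD.inter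
      (isOpen_univ.prod (hb.isOpen hV)))) ?_) fun x hx _ => hx
    refine dense_iff_inter_open.2 fun U hU hUne => ?_
    obtain ⟨⟨x, y⟩, ⟨hxU, hyV⟩, hxy⟩ :=
      hd.inter_open_nonempty _ (hU.prod (hb.isOpen hV)) (hUne.prod hVne)
    exact ⟨x, hxU, ⟨(x, y), ⟨hxy, trivial, hyV⟩, rfl⟩⟩
  filter_upwards [(eventually_countable_ball (countable_countableBasis Y)).2 this] with x hx
  refine hb.dense_iff.2 fun V hV hne => ?_
  obtain ⟨⟨_, y⟩, ⟨hyD, -, hyV⟩, rfl⟩ := hx V hV hne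
  exact ⟨y, hyV, hyD⟩

lemma eventually_preimage_prodMk_mem_residual {C : Set (X × Y)} (hC : C ∈ residual (X × Y)) :
    ∀ᶠ x in residual X, Prod.mk x ⁻¹' C ∈ residual Y := by
  obtain ⟨S, hSo, hSd, hSc, hSC⟩ := mem_residual_iff.1 hC
  have : ∀ D ∈ S, ∀ᶠ x in residual X, Prod.mk x ⁻¹' D ∈ residual Y := fun D hD =>
    (eventually_dense_preimage_prodMk (hSo D hD) (hSd D hD)).mono fun x hx =>
      residual_of_dense_open ((hSo D hD).preimage (Continuous.prodMk_right x)) hx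
  filter_upwards [(eventually_countable_ball hSc).2 this] with x hx
  refine mem_of_superset ((countable_bInter_mem hSc).2 hx) ?_
  rw [← preimage_iInter₂, ← sInter_eq_biInter]
  exact preimage_mono hSC

end KuratowskiUlam

theorem BaireMeasurableSet.isMeagre_or_mem_residual_of_forall_preimage_eq {Y : Type*}
    [TopologicalSpace Y] [BaireSpace Y] {S : Set Y} (hS : BaireMeasurableSet S) {ι : Type*}
    (φ : ι → Y ≃ₜ Y) (hinv : ∀ i, φ i ⁻¹' S = S)
    (htrans : ∀ U V : Set Y, IsOpen U → IsOpen V → U.Nonempty → V.Nonempty →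
      ∃ i, (U ∩ φ i ⁻¹' V).Nonempty) :
    IsMeagre S ∨ S ∈ residual Y := by
  refine or_iff_not_imp_left.2 fun hS' => of_not_not fun hSc => ?_
  obtain ⟨U, hU, hSU⟩ := hS.residualEq_isOpen
  obtain ⟨V, hV, hSV⟩ := hS.compl.residualEq_isOpen
  have hne : ∀ {T W : Set Y}, ¬IsMeagre T → T =ᶠ[residual Y] W → W.Nonempty := fun hT hTW =>
    nonempty_iff_ne_empty.2 fun h => hT (by simpa [h] using isMeagre_diff_of_residualEq hTW)
  obtain ⟨i, hi⟩ := htrans U V hU hV (hne hS' hSU) (hne (by rwa [IsMeagre, compl_compl]) hSV)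
  have hpre : φ i ⁻¹' V =ᶠ[residual Y] φ i ⁻¹' Sᶜ :=
    hSV.symm.comp_tendsto (tendsto_residual_of_isOpenMap (φ i).continuous (φ i).isOpenMap)
  have hempty := hSU.symm.inter hpre
  rw [preimage_compl, hinv, inter_compl_self] at hempty
  exact not_isMeagre_of_isOpen (hU.inter (hV.preimage (φ i).continuous)) hi
    (by simpa using isMeagre_diff_of_residualEq hempty)

lemma E0.symm {x y : ℕ → Bool} (h : E0 x y) : E0 y x :=
  let ⟨N, hN⟩ := h
  ⟨N, fun n hn => (hN n hn).symm⟩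

lemma E0_add_left {d : ℕ → Bool} (hd : E0 d 0) (x : ℕ → Bool) : E0 (d + x) x :=
  let ⟨N, hN⟩ := hd
  ⟨N, fun n hn => by simp [hN n hn]⟩

/-- Finitely supported masks, added in `ℕ → Bool` (where `+` is `xor`), witness the topological
transitivity of the action of `E₀ × E₀`. -/
theorem isMeagre_or_mem_residual_of_E0_invariant {S : Set ((ℕ → Bool) × (ℕ → Bool))}
    (hS : BaireMeasurableSet S)
    (hinv : ∀ x x' y y', E0 x x' → E0 y y' → (x, y) ∈ S → (x', y') ∈ S) :
    IsMeagre S ∨ S ∈ residual _ := by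
  refine hS.isMeagre_or_mem_residual_of_forall_preimage_eq
    (ι := {d : (ℕ → Bool) × (ℕ → Bool) // E0 d.1 0 ∧ E0 d.2 0}) (fun d => Homeomorph.addLeft d.1)
    (fun d => ?_) fun U V hU hV ⟨p, hp⟩ ⟨q, hq⟩ => ?_
  · ext ⟨x, y⟩
    have hx := E0_add_left d.2.1 x
    have hy := E0_add_left d.2.2 y
    exact ⟨hinv _ _ _ _ hx hy, hinv _ _ _ _ hx.symm hy.symm⟩
  · obtain ⟨n, hn⟩ := (eventually_cylinder_prod_subset (hV.mem_nhds hq)).exists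
    let mask : (ℕ → Bool) → (ℕ → Bool) → ℕ → Bool := fun a b => (Iio n).piecewise (b - a) 0
    have hmask : ∀ a b, E0 (mask a b) 0 := fun a b => ⟨n, fun i hi => by simp [mask, not_lt.2 hi]⟩
    have hmask_add : ∀ a b, mask a b + a ∈ cylinder b n := fun a b i hi => by simp [mask, hi]
    exact ⟨⟨(mask p.1 q.1, mask p.2 q.2), hmask _ _, hmask _ _⟩, p, hp,
      hn ⟨hmask_add p.1 q.1, hmask_add p.2 q.2⟩⟩

lemma PiNat.cylinder_subset_cylinder {E : ℕ → Type*} {x y : ∀ n, E n} {m n : ℕ}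
    (hy : y ∈ cylinder x m) (hmn : m ≤ n) : cylinder y n ⊆ cylinder x m :=
  (cylinder_anti y hmn).trans (mem_cylinder_iff_eq.1 hy).subset

lemma PiNat.piecewise_mem_cylinder {α : Type*} {p x y : ℕ → α} {L n : ℕ} (h : y ∈ cylinder x n) :
    (Iio L).piecewise p y ∈ cylinder ((Iio L).piecewise p x) n := fun i hi => by
  by_cases hiL : i < L <;> simp [piecewise, hiL, h i hi]

lemma PiNat.piecewise_eq_of_mem_cylinder {α : Type*} {p x y : ℕ → α} {L n : ℕ} (hLn : L ≤ n)
    (h : y ∈ cylinder ((Iio L).piecewise p x) n) : (Iio L).piecewise p y = y := by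
  ext i
  by_cases hiL : i < L
  · simp [hiL, h i (hiL.trans_le hLn)]
  · simp [hiL]

lemma PiNat.piecewise_mem_cylinder_self {α : Type*} (p y : ℕ → α) (L : ℕ) :
    (Iio L).piecewise p y ∈ cylinder p L := fun i hi => by simp [hi]

section Fusion

variable {D : Set ((ℕ → Bool) × (ℕ → Bool))}

lemma exists_refine_blocks (hDo : IsOpen D) (hDd : Dense D) {L M : ℕ} (hLM : L ≤ M)
    (p q : ℕ → Bool) (w : (ℕ → Bool) × (ℕ → Bool)) :
    ∃ M' ≥ M, ∃ w' ∈ cylinder w.1 M ×ˢ cylinder w.2 M,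
      cylinder ((Iio L).piecewise p w'.1) M' ×ˢ cylinder ((Iio L).piecewise q w'.2) M' ⊆ D := by
  obtain ⟨⟨u, v⟩, ⟨hu, hv⟩, huv⟩ := hDd.inter_open_nonempty
    (cylinder ((Iio L).piecewise p w.1) M ×ˢ cylinder ((Iio L).piecewise q w.2) M)
    ((isOpen_cylinder _ _ _).prod (isOpen_cylinder _ _ _))
    ⟨(_, _), self_mem_cylinder _ _, self_mem_cylinder _ _⟩
  obtain ⟨M', hM', hM'D⟩ :=
    ((eventually_ge_atTop M).and (eventually_cylinder_prod_subset (hDo.mem_nhds huv))).exists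
  -- `w'` is `(u, v)` with the irrelevant first `L` values of `w` restored, so that it extends `w`
  have hrestore : ∀ {p x y : ℕ → Bool}, y ∈ cylinder ((Iio L).piecewise p x) M →
      (Iio L).piecewise x y ∈ cylinder x M ∧ (Iio L).piecewise p ((Iio L).piecewise x y) = y :=
    fun {p x y} h => ⟨fun i hi => by by_cases hiL : i < L <;> simp [hiL, h i hi],
      by rw [← piecewise_eq_of_mem_cylinder hLM h]; ext i; by_cases hiL : i < L <;> simp [hiL]⟩
  refine ⟨M', hM', ((Iio L).piecewise w.1 u, (Iio L).piecewise w.2 v),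
    ⟨(hrestore hu).1, (hrestore hv).1⟩, ?_⟩
  rwa [(hrestore hu).2, (hrestore hv).2]

lemma exists_blocks (hDo : IsOpen D) (hDd : Dense D) (L : ℕ)
    {P : Set ((ℕ → Bool) × (ℕ → Bool))} (hP : P.Finite) :
    ∃ M > L, ∃ w : (ℕ → Bool) × (ℕ → Bool), ∀ pq ∈ P,
      cylinder ((Iio L).piecewise pq.1 w.1) M ×ˢ cylinder ((Iio L).piecewise pq.2 w.2) M ⊆ D := by
  induction P, hP using Set.Finite.induction_on with
  | empty => exact ⟨L + 1, L.lt_succ_self, default, by simp⟩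
  | @insert pq P _ _ ih =>
    obtain ⟨M, hLM, w, hw⟩ := ih
    obtain ⟨M', hMM', w', ⟨hw'₁, hw'₂⟩, hw'⟩ := exists_refine_blocks hDo hDd hLM.le pq.1 pq.2 w
    refine ⟨M', hLM.trans_le hMM', w', ?_⟩
    rintro pq' (rfl | hpq')
    · exact hw'
    · exact (prod_mono (cylinder_subset_cylinder (piecewise_mem_cylinder hw'₁) hMM')
        (cylinder_subset_cylinder (piecewise_mem_cylinder hw'₂) hMM')).trans (hw pq' hpq')

end Fusion

/-- `pre n σ` is the common prefix, of length `len n`, of the images of all `x` with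
`res x n = σ` (the first `n` values of `x`, reversed); `block n c` fills `[len n, len (n + 1))`
when `x n = c`. -/
structure FusionScheme where
  len : ℕ → ℕ
  pre : ℕ → List Bool → ℕ → Bool
  block : ℕ → Bool → ℕ → Bool
  strictMono_len : StrictMono len
  pre_cons : ∀ n c σ, pre (n + 1) (c :: σ) = (Iio (len n)).piecewise (pre n σ) (block n c)

namespace FusionScheme

variable (S : FusionScheme)

def map (x : ℕ → Bool) (k : ℕ) : Bool := S.pre (k + 1) (res x (k + 1)) k

lemma continuous_map : Continuous S.map := by
  refine continuous_pi fun k => ((IsLocallyConstant.iff_eventually_eq _).2 fun x => ?_).continuous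
  filter_upwards [(isOpen_cylinder _ x (k + 1)).mem_nhds (self_mem_cylinder x (k + 1))] with y hy
  rw [cylinder_eq_res, mem_ofPred_eq] at hy
  simp only [map, hy]

lemma pre_mem_cylinder (x : ℕ → Bool) {m n : ℕ} (h : m ≤ n) :
    S.pre n (res x n) ∈ cylinder (S.pre m (res x m)) (S.len m) := by
  induction h with
  | refl => exact self_mem_cylinder _ _
  | step h ih =>
    rw [res_succ, pre_cons]
    exact cylinder_subset_cylinder ih (S.strictMono_len.monotone h)
      (piecewise_mem_cylinder_self _ _ _)

lemma map_mem_cylinder (x : ℕ → Bool) (n : ℕ) :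
    S.map x ∈ cylinder (S.pre n (res x n)) (S.len n) := by
  intro k hk
  rcases le_total (k + 1) n with h | h
  · exact (S.pre_mem_cylinder x h k ((Nat.lt_succ_self k).trans_le (S.strictMono_len.id_le _))).symm
  · exact S.pre_mem_cylinder x h k hk

lemma E0_map {x y : ℕ → Bool} (h : E0 x y) : E0 (S.map x) (S.map y) := by
  obtain ⟨N, hN⟩ := h
  have hagree : ∀ n ≥ N, ∀ i, S.len N ≤ i → i < S.len n →
      S.pre n (res x n) i = S.pre n (res y n) i := by
    intro n hn
    induction n, hn using Nat.le_induction with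
    | base => intro i h1 h2; omega
    | succ n hn ih =>
      intro i h1 h2
      rw [res_succ, res_succ, pre_cons, pre_cons, hN n hn]
      by_cases hi : i < S.len n
      · simp [hi, ih i h1 hi]
      · simp [hi]
  have hN_le : N ≤ S.len N := S.strictMono_len.id_le N
  exact ⟨S.len N, fun k hk => hagree (k + 1) (by omega) k hk
    ((Nat.lt_succ_self k).trans_le (S.strictMono_len.id_le _))⟩

end FusionScheme

lemma exists_fusionScheme {D : ℕ → Set ((ℕ → Bool) × (ℕ → Bool))} (hDo : ∀ n, IsOpen (D n))
    (hDd : ∀ n, Dense (D n)) :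
    ∃ S : FusionScheme, ∀ n σ τ, σ.length = n → τ.length = n →
      cylinder (S.pre (n + 1) (false :: σ)) (S.len (n + 1)) ×ˢ
        cylinder (S.pre (n + 1) (true :: τ)) (S.len (n + 1)) ⊆ D n := by
  choose M hM w hw using fun n L (ψ : List Bool → ℕ → Bool) =>
    exists_blocks (hDo n) (hDd n) L (((List.finite_length_eq Bool n).image ψ).prod
      ((List.finite_length_eq Bool n).image ψ))
  let stage : ℕ → ℕ × (List Bool → ℕ → Bool) := fun n => n.rec (0, fun _ _ => false)
    fun n s => (M n s.1 s.2, fun σ => match σ with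
      | [] => s.2 []
      | c :: σ => (Iio s.1).piecewise (s.2 σ) (cond c (w n s.1 s.2).2 (w n s.1 s.2).1))
  exact ⟨⟨fun n => (stage n).1, fun n => (stage n).2,
    fun n c => cond c (w n (stage n).1 (stage n).2).2 (w n (stage n).1 (stage n).2).1,
    strictMono_nat_of_lt_succ fun n => hM _ _ _, fun n c σ => rfl⟩,
    fun n σ τ hσ hτ => hw n _ _ (_, _) ⟨⟨σ, hσ, rfl⟩, ⟨τ, hτ, rfl⟩⟩⟩

lemma exists_antitone_isOpen_dense_iInter_subset {X : Type*} [TopologicalSpace X] [BaireSpace X]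
    {C : Set X} (hC : C ∈ residual X) :
    ∃ D : ℕ → Set X, (∀ n, IsOpen (D n)) ∧ (∀ n, Dense (D n)) ∧ Antitone D ∧ ⋂ n, D n ⊆ C := by
  obtain ⟨S, hSo, hSd, hSc, hSC⟩ := mem_residual_iff.1 hC
  obtain ⟨T, hT⟩ := (hSc.insert univ).exists_eq_range (insert_nonempty _ _)
  have hTod : ∀ n, IsOpen (T n) ∧ Dense (T n) := fun n => by
    rcases (hT ▸ mem_range_self n : T n ∈ insert univ S) with h | h
    · simp [h]
    · exact ⟨hSo _ h, hSd _ h⟩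
  refine ⟨fun n => ⋂ k ∈ Iic n, T k, fun n => (finite_Iic n).isOpen_biInter fun k _ => (hTod k).1,
    fun n => dense_biInter_of_isOpen (fun k _ => (hTod k).1) (to_countable _) fun k _ => (hTod k).2,
    fun m n h => biInter_mono (Iic_subset_Iic.2 h) fun _ _ => subset_rfl, fun x hx => hSC ?_⟩
  intro s hs
  obtain ⟨n, rfl⟩ : s ∈ range T := hT ▸ mem_insert_of_mem _ hs
  exact mem_iInter₂.1 (mem_iInter.1 hx n) n self_mem_Iic

theorem exists_continuous_E0_hom_forall_not_E0_mem {C : Set ((ℕ → Bool) × (ℕ → Bool))}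
    (hC : C ∈ residual _) :
    ∃ f : (ℕ → Bool) → ℕ → Bool, Continuous f ∧ (∀ x y, E0 x y → E0 (f x) (f y)) ∧
      ∀ x y, ¬E0 x y → (f x, f y) ∈ C := by
  obtain ⟨D, hDo, hDd, hD, hDC⟩ := exists_antitone_isOpen_dense_iInter_subset hC
  -- symmetrizing `D n` lets one pair of blocks serve both orders of `x m ≠ y m`
  obtain ⟨S, hS⟩ := exists_fusionScheme (D := fun n => D n ∩ Prod.swap ⁻¹' D n)
    (fun n => (hDo n).inter ((hDo n).preimage continuous_swap))
    (fun n => (hDd n).inter_of_isOpen_left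
      ((hDd n).preimage (Homeomorph.prodComm _ _).isOpenMap) (hDo n))
  refine ⟨S.map, S.continuous_map, fun x y => S.E0_map, fun x y hxy => ?_⟩
  refine hDC (mem_iInter.2 fun j => ?_)
  obtain ⟨m, hjm, hm⟩ : ∃ m ≥ j, x m ≠ y m := by
    by_contra! h
    exact hxy ⟨j, h⟩
  have hx := S.map_mem_cylinder x (m + 1)
  have hy := S.map_mem_cylinder y (m + 1)
  rw [res_succ] at hx hy
  refine hD hjm ?_
  cases hxm : x m <;> cases hym : y m <;> rw [hxm] at hx <;> rw [hym] at hy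
  · exact absurd (hxm.trans hym.symm) hm
  · exact (hS m _ _ (res_length _ _) (res_length _ _) (mk_mem_prod hx hy)).1
  · exact (hS m _ _ (res_length _ _) (res_length _ _) (mk_mem_prod hy hx)).2
  · exact absurd (hxm.trans hym.symm) hm

/-- If `E` is an analytic equivalence relation on `2^ℕ` extending `E₀` and with no
comeager class, then `E₀` is Borel reducible to `E`. -/
theorem E0_reducible_of_no_comeager_class (E : Set ((ℕ → Bool) × (ℕ → Bool)))
    (hAnal : AnalyticSet E)
    (hEquiv : Equivalence (fun x y => (x, y) ∈ E))
    (hExt : ∀ x y, E0 x y → (x, y) ∈ E)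
    (hNoComeager : ∀ x : ℕ → Bool, {y | (x, y) ∈ E} ∉ residual (ℕ → Bool)) :
    ∃ f : (ℕ → Bool) → (ℕ → Bool), Measurable f ∧
      ∀ x y, E0 x y ↔ (f x, f y) ∈ E := by
  have hinv : ∀ x x' y y', E0 x x' → E0 y y' → (x, y) ∈ E → (x', y') ∈ E :=
    fun x x' y y' hx hy h =>
      hEquiv.trans (hEquiv.symm (hExt x x' hx)) (hEquiv.trans h (hExt y y' hy))
  have hnot_residual : E ∉ residual _ := fun hres =>
    let ⟨x, hx⟩ := (dense_of_mem_residual (eventually_preimage_prodMk_mem_residual hres)).nonempty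
    hNoComeager x hx
  have hmeagre : IsMeagre E :=
    (isMeagre_or_mem_residual_of_E0_invariant hAnal.baireMeasurableSet hinv).resolve_right
      hnot_residual
  obtain ⟨f, hf, hhom, hsep⟩ := exists_continuous_E0_hom_forall_not_E0_mem hmeagre
  exact ⟨f, hf.measurable, fun x y =>
    ⟨fun h => hExt _ _ (hhom x y h), fun h => of_not_not fun h' => hsep x y h' h⟩⟩
end
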